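/- For all integers k, r and s: F(k+r)·G(k−r+s) + F(k−r)·G(k+r+s) = 2·F(k)·G(k+s) + (−1)^{k+r+1}·F(r)²·(G(s+1) + G(s−1)). -/

import Mathlib

/-!
A gibonacci sequence is determined by two consecutive values, so `F = Int.fib`, and two
expressions that are gibonacci in one variable agree once they agree at `0` and `1`.

By Vajda's identity `F(n+i) G(n+j) - F(n) G(n+i+j) = (-1)^n F(i) G(j)` (the addition formula
`G(m+n) = F(m-1) G(n) + F(m) G(n+1)` reduces it to the Casoratian `F(n+1) G(n+j) - F(n) G(n+1+j)`,
which changes sign at each step), the two products on the left differ from `F(k) G(k+s)` by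
`(-1)^k F(r) G(s-r)` and `(-1)^k F(-r) G(s+r)`. With `F(-r) = (-1)^(r+1) F(r)` what remains is
`(-1)^k F(r) (G(s-r) - (-1)^r G(s+r))`, and `G(s+r) - (-1)^r G(s-r) = F(r) (G(s+1) + G(s-1))`
since both sides are gibonacci in `r`.
-/

open Int

def IsGibonacci {M : Type*} [Add M] (G : ℤ → M) : Prop :=
  ∀ n, G (n + 2) = G (n + 1) + G n

theorem isGibonacci_iff {M : Type*} [Add M] {G : ℤ → M} :
    IsGibonacci G ↔ ∀ n, G n = G (n - 1) + G (n - 2) :=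
  ⟨fun h n => by simpa [sub_add] using h (n - 2),
    fun h n => by simpa [add_sub_assoc] using h (n + 2)⟩

theorem isGibonacci_fib : IsGibonacci fib := fun n => by
  rw [fib_add_two, add_comm]

theorem Int.cast_fib_neg {R : Type*} [Ring R] (n : ℤ) :
    (fib (-n) : R) = -(n.negOnePow * fib n) := by
  rcases n.even_or_odd with h | h
  · simp [fib_neg, h, Int.negOnePow_even]
  · simp [fib_neg, h, Int.negOnePow_odd, Int.not_even_iff_odd.mpr h]

namespace IsGibonacci

section AddCommGroup

variable {M : Type*} [AddCommGroup M] {G H : ℤ → M}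

theorem ext (hG : IsGibonacci G) (hH : IsGibonacci H) (h₀ : G 0 = H 0) (h₁ : G 1 = H 1) :
    G = H := by
  have key : ∀ n : ℤ, G n = H n ∧ G (n + 1) = H (n + 1) := by
    intro n
    induction n using Int.induction_on with
    | zero => simpa using ⟨h₀, h₁⟩
    | succ i ih => exact ⟨ih.2, by rw [add_assoc, one_add_one_eq_two, hG, hH, ih.1, ih.2]⟩
    | pred i ih =>
      refine ⟨?_, by simpa using ih.1⟩
      have hGi := hG (-i - 1)
      have hHi := hH (-i - 1)
      rw [show -(i : ℤ) - 1 + 2 = -i + 1 by ring, show -(i : ℤ) - 1 + 1 = -i by ring, ih.1,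
        ih.2] at hGi
      rw [show -(i : ℤ) - 1 + 2 = -i + 1 by ring, show -(i : ℤ) - 1 + 1 = -i by ring] at hHi
      exact add_left_cancel (hGi.symm.trans hHi)
  exact funext fun n => (key n).1

theorem comp_add_const (hG : IsGibonacci G) (c : ℤ) : IsGibonacci (fun n => G (n + c)) :=
  fun n => by dsimp only; rw [add_right_comm n 2, add_right_comm n 1, hG]

theorem sub (hG : IsGibonacci G) (hH : IsGibonacci H) : IsGibonacci (G - H) :=
  fun n => by simp only [Pi.sub_apply, hG n, hH n]; abel

end AddCommGroup

section CommRing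

variable {R : Type*} [CommRing R] {G : ℤ → R}

theorem intCast {G : ℤ → ℤ} (hG : IsGibonacci G) : IsGibonacci (fun n => (G n : R)) :=
  fun n => by dsimp only; rw [hG, Int.cast_add]

theorem mul_const (hG : IsGibonacci G) (c : R) : IsGibonacci (fun n => G n * c) :=
  fun n => by dsimp only; rw [hG, add_mul]

theorem negOnePow_mul_comp_sub (hG : IsGibonacci G) (c : ℤ) :
    IsGibonacci (fun n => (n.negOnePow : R) * G (c - n)) := fun n => by
  have h := hG (c - (n + 2))
  rw [show c - (n + 2) + 2 = c - n by ring, show c - (n + 2) + 1 = c - (n + 1) by ring] at h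
  have h₂ : (n + 2).negOnePow = n.negOnePow := by
    rw [Int.negOnePow_add, Int.negOnePow_even 2 even_two, mul_one]
  dsimp only
  rw [h₂, Int.negOnePow_succ, Units.val_neg, Int.cast_neg]
  linear_combination -(n.negOnePow : R) * h

theorem apply_add (hG : IsGibonacci G) (m n : ℤ) :
    G (m + n) = fib (m - 1) * G n + fib m * G (n + 1) := by
  have hR : IsGibonacci (fun m => (fib (m - 1) : R) * G n + fib m * G (n + 1)) := fun m => by
    have h₁ := isGibonacci_fib (m - 1)
    have h₂ := isGibonacci_fib m
    rw [show m - 1 + 2 = m + 2 - 1 by ring, show m - 1 + 1 = m + 1 - 1 by ring] at h₁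
    dsimp only
    rw [h₁, h₂]
    push_cast
    ring
  refine congrFun (ext (hG.comp_add_const n) hR ?_ ?_) m
  · simp
  · simp [add_comm]

theorem mul_sub_mul_eq_negOnePow_mul {A B : ℤ → R} (hA : IsGibonacci A) (hB : IsGibonacci B)
    (n : ℤ) : A (n + 1) * B n - A n * B (n + 1) = n.negOnePow * (A 1 * B 0 - A 0 * B 1) := by
  have anti : Function.Antiperiodic (fun n => A (n + 1) * B n - A n * B (n + 1)) 1 := fun n => by
    dsimp only
    rw [add_assoc, one_add_one_eq_two, hA, hB]
    ring
  simpa using anti.add_int_mul_eq (x := 0) n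

/-- Vajda's identity, for a Fibonacci factor and a gibonacci factor. -/
theorem fib_add_mul_sub_fib_mul (hG : IsGibonacci G) (n i j : ℤ) :
    fib (n + i) * G (n + j) - fib n * G (n + i + j) = n.negOnePow * fib i * G j := by
  have hW := mul_sub_mul_eq_negOnePow_mul isGibonacci_fib.intCast (hG.comp_add_const j) n
  simp only [fib_one, fib_zero, Int.cast_one, Int.cast_zero, one_mul, zero_mul, sub_zero,
    zero_add, add_right_comm n 1 j] at hW
  rw [add_comm n i, fib_add, add_assoc, hG.apply_add i (n + j)]
  push_cast
  linear_combination (fib i : R) * hW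

theorem sub_negOnePow_mul (hG : IsGibonacci G) (s r : ℤ) :
    G (s + r) - r.negOnePow * G (s - r) = fib r * (G (s + 1) + G (s - 1)) := by
  have hL := (hG.comp_add_const s).sub (hG.negOnePow_mul_comp_sub s)
  have hR := isGibonacci_fib.intCast.mul_const (G (s + 1) + G (s - 1))
  simpa [add_comm] using congrFun (ext hL hR (by simp) (by simp [add_comm])) r

theorem fib_add_mul_add_fib_sub_mul (hG : IsGibonacci G) (k r s : ℤ) :
    fib (k + r) * G (k - r + s) + fib (k - r) * G (k + r + s) =
      2 * fib k * G (k + s) - (k + r).negOnePow * fib r ^ 2 * (G (s + 1) + G (s - 1)) := by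
  have h₁ := hG.fib_add_mul_sub_fib_mul k r (s - r)
  have h₂ := hG.fib_add_mul_sub_fib_mul k (-r) (s + r)
  rw [show k + (s - r) = k - r + s by ring, show k + r + (s - r) = k + s by ring] at h₁
  rw [← sub_eq_add_neg, show k + (s + r) = k + r + s by ring,
    show k - r + (s + r) = k + s by ring, cast_fib_neg] at h₂
  have h₃ := hG.sub_negOnePow_mul s r
  have hsq : (r.negOnePow : R) * r.negOnePow = 1 := by
    rw [← Int.cast_mul, ← Units.val_mul, Int.units_mul_self, Units.val_one, Int.cast_one]
  rw [Int.negOnePow_add, Units.val_mul, Int.cast_mul]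
  linear_combination h₁ + h₂ - (k.negOnePow * r.negOnePow * fib r : R) * h₃
    - (k.negOnePow * fib r * G (s - r) : R) * hsq

end CommRing

end IsGibonacci

/-- a generalization of Catalan's identity involving a gibonacci
sequence. -/
theorem statement18 (F : ℤ → ℤ)
    (hF0 : F 0 = 0) (hF1 : F 1 = 1) (hF : ∀ n : ℤ, F n = F (n - 1) + F (n - 2))
    (G : ℤ → ℝ) (hG : ∀ n : ℤ, G n = G (n - 1) + G (n - 2))
    (k r s : ℤ) :
    (F (k + r) : ℝ) * G (k - r + s) + (F (k - r) : ℝ) * G (k + r + s) =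
      2 * (F k : ℝ) * G (k + s)
        + (-1 : ℝ) ^ (k + r + 1) * (F r : ℝ) ^ 2 * (G (s + 1) + G (s - 1)) := by
  obtain rfl : F = fib :=
    (isGibonacci_iff.mpr hF).ext isGibonacci_fib (by simp [hF0]) (by simp [hF1])
  rw [← Int.cast_negOnePow ℝ, Int.negOnePow_succ,
    (isGibonacci_iff.mpr hG).fib_add_mul_add_fib_sub_mul]
  push_cast
  ring
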